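/- For any locally integrable f ≥ 0 on ℝⁿ, the pointwise bound M f(x) ≤ 6ⁿ Σ_{α ∈ {0,1/3}ⁿ} M^{D_α} f(x) holds, where M is the Hardy–Littlewood maximal operator over all cubes and M^{D_α} is the maximal operator restricted to the shifted dyadic grid D_α. -/

import Mathlib

open Set MeasureTheory ENNReal

/-- The cube `a + [0, ℓ)ⁿ`. -/
def cubeOf {n : ℕ} (a : Fin n → ℝ) (ℓ : ℝ) : Set (Fin n → ℝ) :=
  {y | ∀ i, a i ≤ y i ∧ y i < a i + ℓ}

/-- The shifted dyadic cube `2^{-k}([0,1)ⁿ + j + α)` of the grid `D_α`. -/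
def sCube {n : ℕ} (α : Fin n → ℝ) (k : ℤ) (j : Fin n → ℤ) : Set (Fin n → ℝ) :=
  {x | ∀ i, (2:ℝ)^(-k) * ((j i : ℝ) + α i) ≤ x i ∧ x i < (2:ℝ)^(-k) * ((j i : ℝ) + 1 + α i)}

/-- The average `(1/|S|) ∫_S f` of a nonnegative function, as an extended real. -/
noncomputable def eavg {n : ℕ} (f : (Fin n → ℝ) → ℝ) (S : Set (Fin n → ℝ)) : ℝ≥0∞ :=
  (∫⁻ x in S, ENNReal.ofReal (f x)) / volume S

/-- The Hardy–Littlewood maximal operator over all cubes. -/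
noncomputable def MHL {n : ℕ} (f : (Fin n → ℝ) → ℝ) (x : Fin n → ℝ) : ℝ≥0∞ :=
  ⨆ (a : Fin n → ℝ) (ℓ : ℝ) (_ : 0 < ℓ) (_ : x ∈ cubeOf a ℓ), eavg f (cubeOf a ℓ)

/-- The maximal operator restricted to the shifted dyadic grid `D_α`. -/
noncomputable def MDα {n : ℕ} (α : Fin n → ℝ) (f : (Fin n → ℝ) → ℝ) (x : Fin n → ℝ) :
    ℝ≥0∞ :=
  ⨆ (k : ℤ) (j : Fin n → ℤ) (_ : x ∈ sCube α k j), eavg f (sCube α k j)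

/-!
Take the dyadic scale `δ = 2^{-k}` with `3ℓ ≤ δ ≤ 6ℓ`. In each coordinate, an interval of length
`ℓ ≤ δ/3` either fits in a grid interval of `δ(ℤ + [0,1))`, or it straddles a grid point and then
fits in one of `δ(ℤ + 1/3 + [0,1))`. So every cube `Q` lies in a cube of some grid `D_α` of
volume at most `6ⁿ|Q|`, and averages over `Q` are at most `6ⁿ` times averages over that cube.
-/

noncomputable def thirdsShift {n : ℕ} (b : Fin n → Bool) : Fin n → ℝ :=
  fun i => if b i then 1 / 3 else 0

lemma exists_thirds_interval_superset {δ ℓ : ℝ} (a : ℝ) (hδ : 0 < δ) (hℓδ : 3 * ℓ ≤ δ) :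
    ∃ (m : ℤ) (c : Bool), δ * (m + if c then 1 / 3 else 0) ≤ a ∧
      a + ℓ ≤ δ * (m + if c then 1 / 3 else 0) + δ := by
  set m := ⌊a / δ⌋
  have hm : δ * m ≤ a := by
    have := mul_le_mul_of_nonneg_left (Int.floor_le (a / δ)) hδ.le
    rwa [mul_div_cancel₀ _ hδ.ne'] at this
  have hm' : a < δ * (m + 1) := by
    have := mul_lt_mul_of_pos_left (Int.lt_floor_add_one (a / δ)) hδ
    rwa [mul_div_cancel₀ _ hδ.ne'] at this
  by_cases hfit : a + ℓ ≤ δ * (m + 1)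
  · exact ⟨m, false, by simpa using hm, by simp only [Bool.false_eq_true, if_false]; linarith⟩
  · exact ⟨m, true, by simp only [if_true]; linarith, by simp only [if_true]; linarith⟩

lemma exists_two_zpow_neg_mem_Icc {r : ℝ} (hr : 0 < r) :
    ∃ k : ℤ, r ≤ (2 : ℝ) ^ (-k) ∧ (2 : ℝ) ^ (-k) ≤ 2 * r := by
  obtain ⟨m, hlt, hle⟩ := exists_mem_Ioc_zpow hr one_lt_two
  refine ⟨-(m + 1), by rwa [neg_neg], ?_⟩
  rw [neg_neg, zpow_add_one₀ two_ne_zero]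
  linarith

lemma cubeOf_subset_cubeOf {n : ℕ} {a a' : Fin n → ℝ} {ℓ ℓ' : ℝ}
    (hleft : ∀ i, a' i ≤ a i) (hright : ∀ i, a i + ℓ ≤ a' i + ℓ') :
    cubeOf a ℓ ⊆ cubeOf a' ℓ' :=
  fun _ hy i => ⟨(hleft i).trans (hy i).1, (hy i).2.trans_le (hright i)⟩

lemma sCube_eq_cubeOf {n : ℕ} (α : Fin n → ℝ) (k : ℤ) (j : Fin n → ℤ) :
    sCube α k j = cubeOf (fun i => (2 : ℝ) ^ (-k) * (j i + α i)) ((2 : ℝ) ^ (-k)) := by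
  ext y
  simp only [sCube, cubeOf, mem_ofPred_eq, mul_add, add_right_comm _ (1 : ℝ), mul_one]

lemma volume_cubeOf {n : ℕ} (a : Fin n → ℝ) (ℓ : ℝ) :
    volume (cubeOf a ℓ) = ENNReal.ofReal ℓ ^ n := by
  have : cubeOf a ℓ = univ.pi fun i => Ico (a i) (a i + ℓ) := by
    ext y; simp [cubeOf]
  simp [this, volume_pi_pi, Real.volume_Ico]

lemma exists_sCube_superset {n : ℕ} (a : Fin n → ℝ) {ℓ : ℝ} (hℓ : 0 < ℓ) :
    ∃ (b : Fin n → Bool) (k : ℤ) (j : Fin n → ℤ),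
      cubeOf a ℓ ⊆ sCube (thirdsShift b) k j ∧ (2 : ℝ) ^ (-k) ≤ 6 * ℓ := by
  obtain ⟨k, hk3, hk6⟩ := exists_two_zpow_neg_mem_Icc (by positivity : 0 < 3 * ℓ)
  choose j b hleft hright using fun i =>
    exists_thirds_interval_superset (a i) (zpow_pos two_pos (-k)) hk3
  exact ⟨b, k, j, sCube_eq_cubeOf _ k j ▸ cubeOf_subset_cubeOf hleft hright, by linarith⟩

lemma volume_sCube_le {n : ℕ} {α : Fin n → ℝ} {k : ℤ} {j : Fin n → ℤ} {a : Fin n → ℝ} {ℓ : ℝ}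
    (hk : (2 : ℝ) ^ (-k) ≤ 6 * ℓ) : volume (sCube α k j) ≤ 6 ^ n * volume (cubeOf a ℓ) := by
  rw [sCube_eq_cubeOf, volume_cubeOf, volume_cubeOf, ← mul_pow]
  gcongr
  calc ENNReal.ofReal ((2 : ℝ) ^ (-k)) ≤ ENNReal.ofReal (6 * ℓ) := ENNReal.ofReal_le_ofReal hk
    _ = 6 * ENNReal.ofReal ℓ := by rw [ENNReal.ofReal_mul (by norm_num)]; norm_num

lemma eavg_le_mul_eavg_of_subset {n : ℕ} (f : (Fin n → ℝ) → ℝ) {S T : Set (Fin n → ℝ)}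
    (hST : S ⊆ T) {C : ℝ≥0∞} (hC0 : C ≠ 0) (hC : C ≠ ∞) (hvol : volume T ≤ C * volume S) :
    eavg f S ≤ C * eavg f T := by
  unfold eavg
  calc (∫⁻ x in S, ENNReal.ofReal (f x)) / volume S
      ≤ (∫⁻ x in T, ENNReal.ofReal (f x)) / volume S :=
        ENNReal.div_le_div (lintegral_mono_set hST) le_rfl
    _ = C * ((∫⁻ x in T, ENNReal.ofReal (f x)) / (C * volume S)) := by
        rw [← mul_div_assoc, ENNReal.mul_div_mul_left _ _ hC0 hC]
    _ ≤ C * ((∫⁻ x in T, ENNReal.ofReal (f x)) / volume T) := by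
        gcongr

lemma eavg_sCube_le_MDα {n : ℕ} (f : (Fin n → ℝ) → ℝ) {α : Fin n → ℝ} {k : ℤ}
    {j : Fin n → ℤ} {x : Fin n → ℝ} (hx : x ∈ sCube α k j) :
    eavg f (sCube α k j) ≤ MDα α f x :=
  le_iSup₂_of_le k j (le_iSup_of_le hx le_rfl)

theorem stmt18_general {n : ℕ} (f : (Fin n → ℝ) → ℝ) (x : Fin n → ℝ) :
    MHL f x ≤ 6^n * ∑ b : Fin n → Bool,
      MDα (fun i => if b i then (1:ℝ)/3 else 0) f x := by
  refine iSup₂_le fun a ℓ => iSup₂_le fun hℓ hx => ?_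
  obtain ⟨b, k, j, hsub, hside⟩ := exists_sCube_superset a hℓ
  calc eavg f (cubeOf a ℓ)
      ≤ 6 ^ n * eavg f (sCube (thirdsShift b) k j) :=
        eavg_le_mul_eavg_of_subset f hsub (by positivity) (pow_ne_top (by norm_num))
          (volume_sCube_le hside)
    _ ≤ 6 ^ n * MDα (thirdsShift b) f x := by
        gcongr
        exact eavg_sCube_le_MDα f (hsub hx)
    _ ≤ 6 ^ n * ∑ b' : Fin n → Bool, MDα (thirdsShift b') f x := by
        gcongr
        exact Finset.single_le_sum (f := fun b' => MDα (thirdsShift b') f x)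
          (fun _ _ => zero_le) (Finset.mem_univ b)

/-- For any locally integrable `f ≥ 0` on `ℝⁿ`,
`Mf(x) ≤ 6ⁿ Σ_{α ∈ {0,1/3}ⁿ} M^{D_α} f(x)` pointwise. -/
theorem stmt18 {n : ℕ} (f : (Fin n → ℝ) → ℝ) (hf : LocallyIntegrable f)
    (hf0 : ∀ x, 0 ≤ f x) (x : Fin n → ℝ) :
    MHL f x ≤ 6^n * ∑ b : Fin n → Bool,
      MDα (fun i => if b i then (1:ℝ)/3 else 0) f x :=
  stmt18_general f x
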